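/- There is no solution over ℝ in 2×2 matrices L, R and vector x ∈ ℝ² to the system: x = (1,0)ᵀ, Lx = (0,1)ᵀ, RLx = (1,1)ᵀ, L²x = 0, LRLx = 0, R²Lx = 0, Rx = 0. -/
import Mathlib

theorem stmt_6 :
    ¬ ∃ (L R : Matrix (Fin 2) (Fin 2) ℝ) (x : Fin 2 → ℝ),
      x = ![1, 0] ∧
      L.mulVec x = ![0, 1] ∧
      R.mulVec (L.mulVec x) = ![1, 1] ∧
      (L * L).mulVec x = 0 ∧
      (L * R * L).mulVec x = 0 ∧
      (R * R * L).mulVec x = 0 ∧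
      R.mulVec x = 0 := by
  rintro ⟨L, R, x, hx, h1, h2, h3, h4, h5, h6⟩
  subst hx
  rw [h1] at h2
  have e10 := congrFun h1 0
  have e11 := congrFun h1 1
  have e20 := congrFun h2 0
  have e21 := congrFun h2 1
  have e30 := congrFun h3 0
  have e31 := congrFun h3 1
  have e50 := congrFun h6 0
  have e51 := congrFun h6 1
  have e40 := congrFun h4 0
  have e41 := congrFun h4 1
  simp [Matrix.mulVec, Matrix.mul_apply, dotProduct, Fin.sum_univ_two] at e10 e11 e20 e21 e30 e31 e40 e41 e50 e51
  rw [e10, e11] at e31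
  simp at e31
  rw [e10, e11, e20, e21, e50, e51, e31] at e41
  simp at e41
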